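/- Let S be a (not necessarily commutative) unital ring, f, i, D, I ∈ S, and set M = T(f,i) = ![![f, 0], ![i, f]] and P = T(D,I) = ![![D, 0], ![I, D]] in Matrix (Fin 2) (Fin 2) S. Then for every natural number n, the n-th iterated adjoint action satisfies (ad M)^[n] P = ![![(ad f)^[n] D, 0], ![(ad f)^[n] I − ∑_{l=0}^{n−1} (n.choose (l+1)) • ⁅(ad f)^[n−1−l] D, (ad f)^[l] i⁆, (ad f)^[n] D]], where (ad a)^[k] denotes the k-th iterate of x ↦ ⁅a, x⁆ and n.choose (l+1) = n!/((n−1−l)!·(l+1)!) is a binomial coefficient. (This is the formula for ad(f,i)^n(D_R, I_R) from the proof of the main theorem, expressed in the matrix model.) -/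

import Mathlib

/-! The bracket of two matrices of the form `T a b` is again of that form,
`⁅T f i, T a b⁆ = T ⁅f, a⁆ (⁅f, b⁆ - ⁅a, i⁆)`, so the lower-left entries `bₙ` of
`(ad (T f i))^[n] (T D I)` obey `bₙ₊₁ = ⁅f, bₙ⁆ - ⁅(ad f)^[n] D, i⁆`. The claimed closed form obeys
the same recursion: the Leibniz rule for `ad f` splits each term of the sum in two, and Pascal's
rule recombines them. -/

def T {S : Type*} [Ring S] (a b : S) : Matrix (Fin 2) (Fin 2) S :=
  ![![a, 0], ![b, a]]

open Finset Function

theorem T_lie_T {S : Type*} [Ring S] (f i a b : S) :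
    ⁅T f i, T a b⁆ = T ⁅f, a⁆ (⁅f, b⁆ - ⁅a, i⁆) := by
  rw [Ring.lie_def]
  ext x y
  fin_cases x <;> fin_cases y <;>
    simp only [Matrix.sub_apply, Matrix.mul_apply, Fin.sum_univ_two] <;> simp [T, Ring.lie_def]
  abel

theorem lie_sum_choose_lie_iterate {L : Type*} [LieRing L] (f x y : L) (n : ℕ) :
    ⁅f, ∑ l ∈ range n, n.choose (l + 1) • ⁅(⁅f, ·⁆)^[n - 1 - l] x, (⁅f, ·⁆)^[l] y⁆⁆ +
        ⁅(⁅f, ·⁆)^[n] x, y⁆ =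
      ∑ l ∈ range (n + 1), (n + 1).choose (l + 1) • ⁅(⁅f, ·⁆)^[n - l] x, (⁅f, ·⁆)^[l] y⁆ := by
  set g : L → L := (⁅f, ·⁆)
  have leibniz : ∀ l ∈ range n, ⁅f, ⁅g^[n - 1 - l] x, g^[l] y⁆⁆ =
      ⁅g^[n - l] x, g^[l] y⁆ + ⁅g^[n - 1 - l] x, g^[l + 1] y⁆ := fun l hl => by
    rw [leibniz_lie, show n - l = n - 1 - l + 1 by grind, iterate_succ_apply', iterate_succ_apply']
  have pascal : ∑ l ∈ range (n + 1), (n + 1).choose (l + 1) • ⁅g^[n - l] x, g^[l] y⁆ =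
      (∑ l ∈ range n, n.choose (l + 1) • ⁅g^[n - 1 - l] x, g^[l + 1] y⁆ + ⁅g^[n] x, y⁆) +
        ∑ l ∈ range n, n.choose (l + 1) • ⁅g^[n - l] x, g^[l] y⁆ := by
    simp only [Nat.choose_succ_succ, add_smul, sum_add_distrib]
    rw [sum_range_succ', sum_range_succ _ n, Nat.choose_succ_self, zero_smul, add_zero]
    simp only [Nat.choose_zero_right, one_smul, Nat.sub_zero, iterate_zero, id_eq, Nat.sub_add_eq,
      Nat.sub_right_comm n]
  rw [lie_sum, sum_congr rfl fun l hl => by rw [lie_nsmul, leibniz l hl, smul_add], sum_add_distrib,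
    pascal]
  abel

/-- The iterated adjoint action in the matrix model: with `M = T f i` and
`P = T D I`, for every `n` one has
`(ad M)^[n] P = T ((ad f)^[n] D) ((ad f)^[n] I - ∑_{l=0}^{n-1} (n.choose (l+1)) • ⁅(ad f)^[n-1-l] D, (ad f)^[l] i⁆)`. -/
theorem stmt6 {S : Type*} [Ring S] (f i D I : S) (n : ℕ) :
    (fun X => ⁅T f i, X⁆)^[n] (T D I) =
      T ((fun x => ⁅f, x⁆)^[n] D)
        ((fun x => ⁅f, x⁆)^[n] I -
          ∑ l ∈ Finset.range n,
            (n.choose (l + 1)) • ⁅(fun x => ⁅f, x⁆)^[n - 1 - l] D, (fun x => ⁅f, x⁆)^[l] i⁆) := by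
  let : LieRing S := .ofAssociativeRing
  induction n with
  | zero => simp
  | succ n ih =>
    rw [iterate_succ_apply', ih, T_lie_T, iterate_succ_apply' _ n D, lie_sub,
      iterate_succ_apply' _ n I, Nat.add_sub_cancel, ← lie_sum_choose_lie_iterate, sub_sub]
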